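/- arXiv:1904.01191 — 3 statements merged into one kernel-verified Lean document; each statement's English description precedes it below -/
import Mathlib

section
/- Equality of model-based and model-free expected TD(0) updates under the best non-linear model: let $(X, A, X', R)$ be random variables on a finite probability space with $X, X'$ taking values in $\mathbb{R}^m$, $A$ in a finite set, $R$ in $\mathbb{R}$. Define $\hat x^*(\phi, a) = \mathbb{E}[X' \mid X = \phi, A = a]$ and $\hat r^*(\phi, a) = \mathbb{E}[R \mid X = \phi, A = a]$ (on events of positive probability). Then for any $w \in \mathbb{R}^m$, $\mathbb{E}[(\hat r^*(X, A) + \gamma w^\top \hat x^*(X, A) - w^\top X)\, X] = \mathbb{E}[(R + \gamma w^\top X' - w^\top X)\, X]$. -/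
/-!
On each fibre of `κ = (X, A)` the multiplier `X` is constant and `x̂*`, `r̂*` are the
`p`-weighted averages of `X'` and `R`, so the model-based and the sampled update agree
fibre by fibre; fibres of zero mass contribute nothing to either side. This is the tower
property `E[L_κ (E[Y | κ])] = E[L_κ Y]` for maps `L_κ` linear in `Y` and depending on `ω`
only through `κ`.
-/

open Matrix Finset
open scoped Classical

section CondMean

variable {Ω ι E F : Type*} [AddCommGroup E] [Module ℝ E] [AddCommGroup F] [Module ℝ F]

lemma sum_smul_const_eq_of_eq_average {s : Finset Ω} {p : Ω → ℝ} (hp : ∀ ω ∈ s, 0 ≤ p ω)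
    {Y : Ω → E} {y : E} (hy : 0 < ∑ ω ∈ s, p ω → y = (∑ ω ∈ s, p ω)⁻¹ • ∑ ω ∈ s, p ω • Y ω) :
    ∑ ω ∈ s, p ω • y = ∑ ω ∈ s, p ω • Y ω := by
  rcases (sum_nonneg hp).lt_or_eq with hpos | hzero
  · rw [← sum_smul, hy hpos, smul_inv_smul₀ hpos.ne']
  · have hp0 : ∀ ω ∈ s, p ω = 0 := (sum_eq_zero_iff_of_nonneg hp).mp hzero.symm
    simp +contextual [hp0]

variable [Fintype Ω] [DecidableEq ι]

/-- `E[Y | κ = i]` under the weights `p`; the junk value `0` on fibres of zero mass. -/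
noncomputable def condMean (p : Ω → ℝ) (κ : Ω → ι) (Y : Ω → E) (i : ι) : E :=
  (∑ ω with κ ω = i, p ω)⁻¹ • ∑ ω with κ ω = i, p ω • Y ω

theorem sum_smul_map_eq_of_eq_condMean {p : Ω → ℝ} (hp : ∀ ω, 0 ≤ p ω) (κ : Ω → ι)
    (Y : Ω → E) (Yhat : ι → E)
    (hY : ∀ i, 0 < ∑ ω with κ ω = i, p ω → Yhat i = condMean p κ Y i)
    (L : ι → E →ₗ[ℝ] F) :
    ∑ ω, p ω • L (κ ω) (Yhat (κ ω)) = ∑ ω, p ω • L (κ ω) (Y ω) := by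
  have hκ : ∀ ω ∈ univ, κ ω ∈ univ.image κ := fun ω _ => mem_image_of_mem κ (mem_univ ω)
  rw [← sum_fiberwise_of_maps_to hκ, ← sum_fiberwise_of_maps_to hκ]
  refine sum_congr rfl fun i _ => ?_
  have hfibre : ∑ ω with κ ω = i, p ω • Yhat i = ∑ ω with κ ω = i, p ω • Y ω :=
    sum_smul_const_eq_of_eq_average (fun ω _ => hp ω) (hY i)
  calc ∑ ω with κ ω = i, p ω • L (κ ω) (Yhat (κ ω))
      = L i (∑ ω with κ ω = i, p ω • Yhat i) := by
        rw [map_sum]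
        exact sum_congr rfl fun ω hω => by rw [(mem_filter.mp hω).2, map_smul]
    _ = ∑ ω with κ ω = i, p ω • L (κ ω) (Y ω) := by
        rw [hfibre, map_sum]
        exact sum_congr rfl fun ω hω => by rw [(mem_filter.mp hω).2, map_smul]

end CondMean

theorem model_based_td_eq_model_free_td_general
    {m : ℕ} {Ω 𝒜 : Type*} [Fintype Ω]
    (p : Ω → ℝ) (hp : ∀ ω, 0 ≤ p ω)
    (X X' : Ω → (Fin m → ℝ)) (A : Ω → 𝒜) (R : Ω → ℝ)
    (γ : ℝ) (w : Fin m → ℝ)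
    (P : (Fin m → ℝ) → 𝒜 → ℝ)
    (hP : ∀ φ a, P φ a = ∑ ω ∈ univ.filter (fun ω => X ω = φ ∧ A ω = a), p ω)
    (xstar : (Fin m → ℝ) → 𝒜 → (Fin m → ℝ)) (rstar : (Fin m → ℝ) → 𝒜 → ℝ)
    (hx : ∀ φ a, 0 < P φ a →
      xstar φ a = (P φ a)⁻¹ • ∑ ω ∈ univ.filter (fun ω => X ω = φ ∧ A ω = a), p ω • X' ω)
    (hr : ∀ φ a, 0 < P φ a →
      rstar φ a = (P φ a)⁻¹ * ∑ ω ∈ univ.filter (fun ω => X ω = φ ∧ A ω = a), p ω * R ω) :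
    ∑ ω, p ω • (rstar (X ω) (A ω) + γ * (w ⬝ᵥ xstar (X ω) (A ω)) - w ⬝ᵥ X ω) • X ω
      = ∑ ω, p ω • (R ω + γ * (w ⬝ᵥ X' ω) - w ⬝ᵥ X ω) • X ω := by
  set κ : Ω → (Fin m → ℝ) × 𝒜 := fun ω => (X ω, A ω)
  have hfibre : ∀ φ a,
      univ.filter (fun ω => κ ω = (φ, a)) = univ.filter (fun ω => X ω = φ ∧ A ω = a) := by
    intro φ a
    simp [κ, Prod.ext_iff]
  have hr' : ∀ i, 0 < ∑ ω with κ ω = i, p ω → Function.uncurry rstar i = condMean p κ R i := by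
    rintro ⟨φ, a⟩ hi
    rw [hfibre, ← hP] at hi
    rw [condMean, hfibre, ← hP, smul_eq_mul]
    exact hr φ a hi
  have hx' : ∀ i, 0 < ∑ ω with κ ω = i, p ω → Function.uncurry xstar i = condMean p κ X' i := by
    rintro ⟨φ, a⟩ hi
    rw [hfibre, ← hP] at hi
    rw [condMean, hfibre, ← hP]
    exact hx φ a hi
  have reward := sum_smul_map_eq_of_eq_condMean hp κ R _ hr' fun i => LinearMap.id.smulRight i.1
  have next := sum_smul_map_eq_of_eq_condMean hp κ X' _ hx'
    fun i => (γ • dotProductBilin ℝ ℝ w).smulRight i.1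
  simp only [LinearMap.smulRight_apply, LinearMap.id_apply, LinearMap.smul_apply,
    dotProductBilin_apply_apply, smul_eq_mul, Function.uncurry_apply_pair, κ] at reward next
  simp only [add_smul, sub_smul, smul_add, smul_sub, sum_add_distrib, sum_sub_distrib]
  rw [reward, next]

/-- the expected TD(0) update using the best non-linear model
(exact conditional expectations given `(X, A)`) equals the expected
model-free TD(0) update. -/
theorem model_based_td_eq_model_free_td
    {m : ℕ} {Ω 𝒜 : Type*} [Fintype Ω] [Fintype 𝒜]
    (p : Ω → ℝ) (hp : ∀ ω, 0 ≤ p ω) (hp1 : ∑ ω, p ω = 1)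
    (X X' : Ω → (Fin m → ℝ)) (A : Ω → 𝒜) (R : Ω → ℝ)
    (γ : ℝ) (hγ : 0 ≤ γ ∧ γ < 1) (w : Fin m → ℝ)
    (P : (Fin m → ℝ) → 𝒜 → ℝ)
    (hP : ∀ φ a, P φ a = ∑ ω ∈ univ.filter (fun ω => X ω = φ ∧ A ω = a), p ω)
    (xstar : (Fin m → ℝ) → 𝒜 → (Fin m → ℝ)) (rstar : (Fin m → ℝ) → 𝒜 → ℝ)
    (hx : ∀ φ a, 0 < P φ a →
      xstar φ a = (P φ a)⁻¹ • ∑ ω ∈ univ.filter (fun ω => X ω = φ ∧ A ω = a), p ω • X' ω)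
    (hr : ∀ φ a, 0 < P φ a →
      rstar φ a = (P φ a)⁻¹ * ∑ ω ∈ univ.filter (fun ω => X ω = φ ∧ A ω = a), p ω * R ω) :
    ∑ ω, p ω • (rstar (X ω) (A ω) + γ * (w ⬝ᵥ xstar (X ω) (A ω)) - w ⬝ᵥ X ω) • X ω
      = ∑ ω, p ω • (R ω + γ * (w ⬝ᵥ X' ω) - w ⬝ᵥ X ω) • X ω :=
  model_based_td_eq_model_free_td_general p hp X X' A R γ w P hP xstar rstar hx hr
end

section
/- Consequence for fixed points (Proposition 1, non-linear part): under the setting above, if $\mathbb{E}[X(X - \gamma X')^\top]$ is invertible, then the model-free TD fixed point $w_{\text{env}} = \mathbb{E}[X(X - \gamma X')^\top]^{-1}\mathbb{E}[R\, X]$ equals the fixed point of the expected TD(0) update using the best non-linear model, $w_{\text{non-linear}} = \mathbb{E}[X(X - \gamma \hat x^*(X, A))^\top]^{-1} \mathbb{E}[\hat r^*(X, A)\, X]$, and in particular the latter matrix is also invertible. -/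
open Matrix Finset
open scoped Classical

/-!
By the tower property, conditioning on `(X, A)` does not change an expectation `E[L_{X,A}(q)]`
with `L_{X,A}` linear. Both the matrix `E[X (X - γ X')ᵀ]` and the vector `E[R X]`
are of this form in `X'` and `R` respectively, so replacing `X'` by `x̂*(X, A)` and `R` by
`r̂*(X, A)` leaves both unchanged, and the two fixed points are literally the same expression.
-/

section CondAvg

variable {Ω K V W : Type*} [Fintype Ω] [AddCommGroup V] [Module ℝ V]
  [AddCommGroup W] [Module ℝ W]

/-- `qstar ∘ κ` is a version of `E[q | κ]`; on null fibres `qstar` is unconstrained. -/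
def IsCondAvg (p : Ω → ℝ) (κ : Ω → K) (q : Ω → V) (qstar : K → V) : Prop :=
  ∀ k, 0 < ∑ ω ∈ univ.filter (κ · = k), p ω →
    qstar k = (∑ ω ∈ univ.filter (κ · = k), p ω)⁻¹ • ∑ ω ∈ univ.filter (κ · = k), p ω • q ω

variable {p : Ω → ℝ} {κ : Ω → K} {q : Ω → V} {qstar : K → V}

theorem IsCondAvg.sum_fiber_smul (h : IsCondAvg p κ q qstar) (hp : ∀ ω, 0 ≤ p ω) (k : K) :
    (∑ ω ∈ univ.filter (κ · = k), p ω) • qstar k = ∑ ω ∈ univ.filter (κ · = k), p ω • q ω := by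
  rcases (sum_nonneg fun ω _ => hp ω : 0 ≤ ∑ ω ∈ univ.filter (κ · = k), p ω).lt_or_eq
    with hpos | hnull
  · rw [h k hpos, smul_inv_smul₀ hpos.ne']
  · have hzero := (sum_eq_zero_iff_of_nonneg fun ω _ => hp ω).mp hnull.symm
    rw [← hnull, zero_smul, sum_eq_zero fun ω hω => by rw [hzero ω hω, zero_smul]]

theorem IsCondAvg.sum_smul_map_eq (h : IsCondAvg p κ q qstar) (hp : ∀ ω, 0 ≤ p ω)
    (L : K → V →ₗ[ℝ] W) :
    ∑ ω, p ω • L (κ ω) (qstar (κ ω)) = ∑ ω, p ω • L (κ ω) (q ω) := by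
  have hmaps : ∀ ω ∈ (univ : Finset Ω), κ ω ∈ univ.image κ :=
    fun ω _ => mem_image_of_mem κ (mem_univ ω)
  rw [← sum_fiberwise_of_maps_to hmaps, ← sum_fiberwise_of_maps_to hmaps]
  refine sum_congr rfl fun k _ => ?_
  calc ∑ ω ∈ univ.filter (κ · = k), p ω • L (κ ω) (qstar (κ ω))
      = ∑ ω ∈ univ.filter (κ · = k), p ω • L k (qstar k) :=
        sum_congr rfl fun ω hω => by rw [(mem_filter.1 hω).2]
    _ = L k ((∑ ω ∈ univ.filter (κ · = k), p ω) • qstar k) := by rw [map_smul, sum_smul]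
    _ = L k (∑ ω ∈ univ.filter (κ · = k), p ω • q ω) := by rw [h.sum_fiber_smul hp k]
    _ = ∑ ω ∈ univ.filter (κ · = k), p ω • L (κ ω) (q ω) := by
        rw [map_sum]
        exact sum_congr rfl fun ω hω => by rw [map_smul, (mem_filter.1 hω).2]

end CondAvg

theorem sum_smul_vecMulVec_sub_smul {Ω n : Type*} [Fintype Ω] (p : Ω → ℝ) (x y : Ω → n → ℝ)
    (γ : ℝ) :
    ∑ ω, p ω • vecMulVec (x ω) (x ω - γ • y ω)
      = ∑ ω, p ω • vecMulVec (x ω) (x ω) - γ • ∑ ω, p ω • vecMulVec (x ω) (y ω) := by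
  simp only [vecMulVec_sub, vecMulVec_smul, smul_sub, sum_sub_distrib, smul_sum, smul_comm γ]

theorem env_fixed_point_eq_nonlinear_model_fixed_point_general
    {m : ℕ} {Ω 𝒜 : Type*} [Fintype Ω]
    (p : Ω → ℝ) (hp : ∀ ω, 0 ≤ p ω)
    (X X' : Ω → (Fin m → ℝ)) (A : Ω → 𝒜) (R : Ω → ℝ)
    (γ : ℝ)
    (P : (Fin m → ℝ) → 𝒜 → ℝ)
    (hP : ∀ φ a, P φ a = ∑ ω ∈ univ.filter (fun ω => X ω = φ ∧ A ω = a), p ω)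
    (xstar : (Fin m → ℝ) → 𝒜 → (Fin m → ℝ)) (rstar : (Fin m → ℝ) → 𝒜 → ℝ)
    (hx : ∀ φ a, 0 < P φ a →
      xstar φ a = (P φ a)⁻¹ • ∑ ω ∈ univ.filter (fun ω => X ω = φ ∧ A ω = a), p ω • X' ω)
    (hr : ∀ φ a, 0 < P φ a →
      rstar φ a = (P φ a)⁻¹ * ∑ ω ∈ univ.filter (fun ω => X ω = φ ∧ A ω = a), p ω * R ω)
    (Aenv Amodel : Matrix (Fin m) (Fin m) ℝ)
    (hAenv : Aenv = ∑ ω, p ω • vecMulVec (X ω) (X ω - γ • X' ω))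
    (hAmodel : Amodel = ∑ ω, p ω • vecMulVec (X ω) (X ω - γ • xstar (X ω) (A ω)))
    (hinv : IsUnit Aenv) :
    IsUnit Amodel ∧
      Aenv⁻¹ *ᵥ (∑ ω, p ω • R ω • X ω)
        = Amodel⁻¹ *ᵥ (∑ ω, p ω • rstar (X ω) (A ω) • X ω) := by
  simp only [hP] at hx hr
  have hxstar : IsCondAvg p (fun ω => (X ω, A ω)) X' (fun k => xstar k.1 k.2) := fun k hk => by
    simp only [Prod.ext_iff] at hk ⊢
    exact hx k.1 k.2 hk
  have hrstar : IsCondAvg p (fun ω => (X ω, A ω)) R (fun k => rstar k.1 k.2) := fun k hk => by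
    simp only [Prod.ext_iff, smul_eq_mul] at hk ⊢
    exact hr k.1 k.2 hk
  have hA : Amodel = Aenv := by
    rw [hAmodel, hAenv, sum_smul_vecMulVec_sub_smul, sum_smul_vecMulVec_sub_smul]
    congr 2
    exact hxstar.sum_smul_map_eq hp fun k => vecMulVecBilin ℝ ℝ k.1
  have hb : ∑ ω, p ω • rstar (X ω) (A ω) • X ω = ∑ ω, p ω • R ω • X ω :=
    hrstar.sum_smul_map_eq hp fun k => LinearMap.toSpanSingleton ℝ _ k.1
  rw [hA, hb]
  exact ⟨hinv, rfl⟩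

/-- if `E[X(X - γX')ᵀ]` is invertible, then the model-free TD
fixed point equals the fixed point of the expected TD(0) update with the best
non-linear model, and the model-based matrix is also invertible. -/
theorem env_fixed_point_eq_nonlinear_model_fixed_point
    {m : ℕ} {Ω 𝒜 : Type*} [Fintype Ω] [Fintype 𝒜]
    (p : Ω → ℝ) (hp : ∀ ω, 0 ≤ p ω) (hp1 : ∑ ω, p ω = 1)
    (X X' : Ω → (Fin m → ℝ)) (A : Ω → 𝒜) (R : Ω → ℝ)
    (γ : ℝ) (hγ : 0 ≤ γ ∧ γ < 1)
    (P : (Fin m → ℝ) → 𝒜 → ℝ)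
    (hP : ∀ φ a, P φ a = ∑ ω ∈ univ.filter (fun ω => X ω = φ ∧ A ω = a), p ω)
    (xstar : (Fin m → ℝ) → 𝒜 → (Fin m → ℝ)) (rstar : (Fin m → ℝ) → 𝒜 → ℝ)
    (hx : ∀ φ a, 0 < P φ a →
      xstar φ a = (P φ a)⁻¹ • ∑ ω ∈ univ.filter (fun ω => X ω = φ ∧ A ω = a), p ω • X' ω)
    (hr : ∀ φ a, 0 < P φ a →
      rstar φ a = (P φ a)⁻¹ * ∑ ω ∈ univ.filter (fun ω => X ω = φ ∧ A ω = a), p ω * R ω)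
    (Aenv Amodel : Matrix (Fin m) (Fin m) ℝ)
    (hAenv : Aenv = ∑ ω, p ω • vecMulVec (X ω) (X ω - γ • X' ω))
    (hAmodel : Amodel = ∑ ω, p ω • vecMulVec (X ω) (X ω - γ • xstar (X ω) (A ω)))
    (hinv : IsUnit Aenv) :
    IsUnit Amodel ∧
      Aenv⁻¹ *ᵥ (∑ ω, p ω • R ω • X ω)
        = Amodel⁻¹ *ᵥ (∑ ω, p ω • rstar (X ω) (A ω) • X ω) :=
  env_fixed_point_eq_nonlinear_model_fixed_point_general p hp X X' A R γ P hP xstar rstar hx hr Aenv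
    Amodel hAenv hAmodel hinv
end

section
/- Proposition 2 (MB-MSPBE equals MSPBE for the best non-linear model): with $(X, A, X', R)$ on a finite probability space, $\hat x^*(\phi,a) = \mathbb{E}[X'|X=\phi,A=a]$, $\hat r^*(\phi,a) = \mathbb{E}[R|X=\phi,A=a]$, $C = \mathbb{E}[X X^\top]$ invertible, define $\delta(w) = R + \gamma w^\top X' - w^\top X$ and $\Delta(w) = \hat r^*(X,A) + \gamma w^\top \hat x^*(X,A) - w^\top X$. Then for all $w$: $\mathbb{E}[\Delta(w) X]^\top C^{-1} \mathbb{E}[\Delta(w) X] = \mathbb{E}[\delta(w) X]^\top C^{-1} \mathbb{E}[\delta(w) X]$. -/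
/-!
Both quadratic forms are built from the same vector, because `𝔼[Δ(w) X] = 𝔼[δ(w) X]`: the model
part of `Δ(w)` is `𝔼[R + γ w ⬝ X' | X, A]`, and multiplying by `X`, a function of `(X, A)`, commutes
with taking this conditional expectation (tower property).
-/

open Matrix Finset
open scoped Classical

section CondExp

variable {Ω κ R 𝕜 E F : Type*} [Fintype Ω]

/-- `Ystar` is a version of `𝔼[Y | K]` under the weights `p`; on a fiber of mass zero it is
unconstrained. -/
def IsCondExp [Semiring R] [AddCommMonoid E] [Module R E]
    (p : Ω → R) (K : Ω → κ) (Y : Ω → E) (Ystar : κ → E) : Prop :=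
  ∀ k, (∑ ω ∈ univ with K ω = k, p ω) • Ystar k = ∑ ω ∈ univ with K ω = k, p ω • Y ω

theorem isCondExp_of_inv_smul [Field 𝕜] [LinearOrder 𝕜] [IsStrictOrderedRing 𝕜]
    [AddCommMonoid E] [Module 𝕜 E] {p : Ω → 𝕜} (hp : ∀ ω, 0 ≤ p ω) {K : Ω → κ}
    {Y : Ω → E} {Ystar : κ → E}
    (h : ∀ k, 0 < ∑ ω ∈ univ with K ω = k, p ω →
      Ystar k = (∑ ω ∈ univ with K ω = k, p ω)⁻¹ • ∑ ω ∈ univ with K ω = k, p ω • Y ω) :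
    IsCondExp p K Y Ystar := by
  intro k
  rcases (sum_nonneg fun ω _ => hp ω).eq_or_lt with hnull | hpos
  · have hzero := (sum_eq_zero_iff_of_nonneg fun ω _ => hp ω).1 hnull.symm
    rw [← hnull, zero_smul, sum_eq_zero fun ω hω => by rw [hzero ω hω, zero_smul]]
  · rw [h k hpos, smul_inv_smul₀ hpos.ne']

namespace IsCondExp

variable [CommSemiring R] [AddCommMonoid E] [Module R E] [AddCommMonoid F] [Module R F]
  {p : Ω → R} {K : Ω → κ}

theorem add {Y Z : Ω → E} {Ystar Zstar : κ → E} (hY : IsCondExp p K Y Ystar)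
    (hZ : IsCondExp p K Z Zstar) : IsCondExp p K (Y + Z) (Ystar + Zstar) := fun k => by
  simp only [Pi.add_apply, smul_add, sum_add_distrib, hY k, hZ k]

theorem map {Y : Ω → E} {Ystar : κ → E} (h : IsCondExp p K Y Ystar) (L : E →ₗ[R] F) :
    IsCondExp p K (L ∘ Y) (L ∘ Ystar) := fun k => by
  simp only [Function.comp_apply, ← L.map_smul, ← map_sum, h k]

theorem sum_smul_smul {Y : Ω → R} {Ystar : κ → R} (h : IsCondExp p K Y Ystar) (v : κ → F) :
    ∑ ω, p ω • Ystar (K ω) • v (K ω) = ∑ ω, p ω • Y ω • v (K ω) := by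
  have hK : ∀ ω ∈ univ, K ω ∈ univ.image K := fun ω _ => mem_image_of_mem K (mem_univ ω)
  rw [← sum_fiberwise_of_maps_to hK, ← sum_fiberwise_of_maps_to hK]
  refine sum_congr rfl fun k _ => ?_
  calc ∑ ω ∈ univ with K ω = k, p ω • Ystar (K ω) • v (K ω)
      = ((∑ ω ∈ univ with K ω = k, p ω) • Ystar k) • v k := by
        rw [sum_smul, sum_smul]
        exact sum_congr rfl fun ω hω => by rw [(mem_filter.1 hω).2, smul_assoc]
    _ = (∑ ω ∈ univ with K ω = k, p ω • Y ω) • v k := by rw [h k]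
    _ = ∑ ω ∈ univ with K ω = k, p ω • Y ω • v (K ω) := by
        rw [sum_smul]
        exact sum_congr rfl fun ω hω => by rw [(mem_filter.1 hω).2, smul_assoc]

end IsCondExp

end CondExp

theorem mbmspbe_eq_mspbe_general
    {m : ℕ} {Ω 𝒜 : Type*} [Fintype Ω] [Fintype 𝒜]
    (p : Ω → ℝ) (hp : ∀ ω, 0 ≤ p ω)
    (X X' : Ω → (Fin m → ℝ)) (A : Ω → 𝒜) (R : Ω → ℝ)
    (γ : ℝ)
    (P : (Fin m → ℝ) → 𝒜 → ℝ)
    (hP : ∀ φ a, P φ a = ∑ ω ∈ univ.filter (fun ω => X ω = φ ∧ A ω = a), p ω)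
    (xstar : (Fin m → ℝ) → 𝒜 → (Fin m → ℝ)) (rstar : (Fin m → ℝ) → 𝒜 → ℝ)
    (hx : ∀ φ a, 0 < P φ a →
      xstar φ a = (P φ a)⁻¹ • ∑ ω ∈ univ.filter (fun ω => X ω = φ ∧ A ω = a), p ω • X' ω)
    (hr : ∀ φ a, 0 < P φ a →
      rstar φ a = (P φ a)⁻¹ * ∑ ω ∈ univ.filter (fun ω => X ω = φ ∧ A ω = a), p ω * R ω)
    (C : Matrix (Fin m) (Fin m) ℝ) :
    ∀ w : Fin m → ℝ,
      (∑ ω, p ω • (rstar (X ω) (A ω) + γ * (w ⬝ᵥ xstar (X ω) (A ω)) - w ⬝ᵥ X ω) • X ω)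
          ⬝ᵥ (C⁻¹ *ᵥ ∑ ω, p ω • (rstar (X ω) (A ω) + γ * (w ⬝ᵥ xstar (X ω) (A ω)) - w ⬝ᵥ X ω) • X ω)
        = (∑ ω, p ω • (R ω + γ * (w ⬝ᵥ X' ω) - w ⬝ᵥ X ω) • X ω)
          ⬝ᵥ (C⁻¹ *ᵥ ∑ ω, p ω • (R ω + γ * (w ⬝ᵥ X' ω) - w ⬝ᵥ X ω) • X ω) := by
  intro w
  let K : Ω → (Fin m → ℝ) × 𝒜 := fun ω => (X ω, A ω)
  have hxstar : IsCondExp p K X' fun k => xstar k.1 k.2 :=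
    isCondExp_of_inv_smul hp fun k => by simp only [K, Prod.ext_iff, ← hP]; exact hx k.1 k.2
  have hrstar : IsCondExp p K R fun k => rstar k.1 k.2 :=
    isCondExp_of_inv_smul hp fun k => by simp only [K, Prod.ext_iff, ← hP]; exact hr k.1 k.2
  have hmodel : IsCondExp p K (fun ω => R ω + γ * (w ⬝ᵥ X' ω))
      fun k => rstar k.1 k.2 + γ * (w ⬝ᵥ xstar k.1 k.2) :=
    hrstar.add (hxstar.map (γ • dotProductBilin ℝ ℝ w))
  have htower : ∑ ω, p ω • (rstar (X ω) (A ω) + γ * (w ⬝ᵥ xstar (X ω) (A ω)) - w ⬝ᵥ X ω) • X ω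
      = ∑ ω, p ω • (R ω + γ * (w ⬝ᵥ X' ω) - w ⬝ᵥ X ω) • X ω := by
    simp only [sub_smul, smul_sub, sum_sub_distrib]
    exact congrArg (· - _) (hmodel.sum_smul_smul Prod.fst)
  rw [htower]

/-- Proposition 2: MB-MSPBE built from the best non-linear
model's TD error `Δ(w)` equals MSPBE built from the data TD error `δ(w)`. -/
theorem mbmspbe_eq_mspbe
    {m : ℕ} {Ω 𝒜 : Type*} [Fintype Ω] [Fintype 𝒜]
    (p : Ω → ℝ) (hp : ∀ ω, 0 ≤ p ω) (hp1 : ∑ ω, p ω = 1)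
    (X X' : Ω → (Fin m → ℝ)) (A : Ω → 𝒜) (R : Ω → ℝ)
    (γ : ℝ) (hγ : 0 ≤ γ ∧ γ < 1)
    (P : (Fin m → ℝ) → 𝒜 → ℝ)
    (hP : ∀ φ a, P φ a = ∑ ω ∈ univ.filter (fun ω => X ω = φ ∧ A ω = a), p ω)
    (xstar : (Fin m → ℝ) → 𝒜 → (Fin m → ℝ)) (rstar : (Fin m → ℝ) → 𝒜 → ℝ)
    (hx : ∀ φ a, 0 < P φ a →
      xstar φ a = (P φ a)⁻¹ • ∑ ω ∈ univ.filter (fun ω => X ω = φ ∧ A ω = a), p ω • X' ω)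
    (hr : ∀ φ a, 0 < P φ a →
      rstar φ a = (P φ a)⁻¹ * ∑ ω ∈ univ.filter (fun ω => X ω = φ ∧ A ω = a), p ω * R ω)
    (C : Matrix (Fin m) (Fin m) ℝ)
    (hC : C = ∑ ω, p ω • vecMulVec (X ω) (X ω)) (hCinv : IsUnit C) :
    ∀ w : Fin m → ℝ,
      (∑ ω, p ω • (rstar (X ω) (A ω) + γ * (w ⬝ᵥ xstar (X ω) (A ω)) - w ⬝ᵥ X ω) • X ω)
          ⬝ᵥ (C⁻¹ *ᵥ ∑ ω, p ω • (rstar (X ω) (A ω) + γ * (w ⬝ᵥ xstar (X ω) (A ω)) - w ⬝ᵥ X ω) • X ω)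
        = (∑ ω, p ω • (R ω + γ * (w ⬝ᵥ X' ω) - w ⬝ᵥ X ω) • X ω)
          ⬝ᵥ (C⁻¹ *ᵥ ∑ ω, p ω • (R ω + γ * (w ⬝ᵥ X' ω) - w ⬝ᵥ X ω) • X ω) :=
  mbmspbe_eq_mspbe_general p hp X X' A R γ P hP xstar rstar hx hr C
end
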